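/- arXiv:2510.17577 — 3 statements merged into one kernel-verified Lean document; each statement's English description precedes it below -/
import Mathlib

section
/- Let f : ℝ^N → ℝ ∪ {+∞} be a Borel function satisfying assumption (HF), and let ξ ∈ ℝ^N, k ∈ {1,…,N}, ξ₁,…,ξ_{k+1} ∈ ℝ^N and strictly positive reals α₁,…,α_{k+1} be such that Σᵢ αᵢ = 1, Σᵢ αᵢ ξᵢ = ξ and Σᵢ αᵢ f(ξᵢ) = f**(ξ). Then f(ξᵢ) = f**(ξᵢ) for every i = 1,…,k+1, and there exists a vector a ∈ ℝ^N such that a belongs to the subdifferential ∂f**(ξ) and to ∂f**(ξᵢ) for every i = 1,…,k+1. -/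
open MeasureTheory Set Filter Topology RealInnerProductSpace
open scoped Classical

noncomputable section

/-- `ℝ^N` with the Euclidean structure. -/
abbrev Euc (N : ℕ) : Type := EuclideanSpace ℝ (Fin N)

/-- The lower semicontinuous convex envelope `f**` of `f : ℝ^N → ℝ ∪ {+∞}`:
the pointwise supremum of all affine minorants of `f`. -/
def convEnv {N : ℕ} (f : Euc N → EReal) (ξ : Euc N) : EReal :=
  sSup {y : EReal | ∃ (a : Euc N) (b : ℝ),
    (∀ ζ : Euc N, ((⟪a, ζ⟫ + b : ℝ) : EReal) ≤ f ζ) ∧ y = ((⟪a, ξ⟫ + b : ℝ) : EReal)}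

/-- Condition (HF)(ii) = (HF')(ii): for every `ξ` either `f**(ξ) = f(ξ)` or `ξ` is a strictly
positive convex combination of `k+1` points where the value of `f` averages to `f**(ξ)` and
whose linear span has dimension `k`, for some `k ∈ {1, …, N}`. -/
def HFii {N : ℕ} (f : Euc N → EReal) : Prop :=
  ∀ ξ : Euc N, convEnv f ξ = f ξ ∨
    ∃ k : ℕ, 1 ≤ k ∧ k ≤ N ∧
      ∃ (ξs : Fin (k + 1) → Euc N) (α : Fin (k + 1) → ℝ),
        (∀ i, 0 < α i) ∧ (∑ i, α i = 1) ∧ (∑ i, α i • ξs i = ξ) ∧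
        (∑ i, ((α i : EReal) * f (ξs i)) = convEnv f ξ) ∧
        Module.finrank ℝ (Submodule.span ℝ (Set.range ξs)) = k

/-- Condition (HF)(iii) = (HF')(iii): for every `R > 0` there are `N+1` points containing the
ball `B̄(0,R)` in the closed convex hull of them, at which `f` is finite and agrees with `f**`. -/
def HFiii {N : ℕ} (f : Euc N → EReal) : Prop :=
  ∀ R : ℝ, 0 < R → ∃ ζs : Fin (N + 1) → Euc N,
    Metric.closedBall (0 : Euc N) R ⊆ closure (convexHull ℝ (Set.range ζs)) ∧
    ∀ j, f (ζs j) = convEnv f (ζs j) ∧ f (ζs j) ≠ ⊤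

/-- Assumption (HF): linear growth from below, plus (HF)(ii) and (HF)(iii). -/
def HF {N : ℕ} (f : Euc N → EReal) : Prop :=
  (∃ c₁ : ℝ, 0 < c₁ ∧ ∃ c₂ : ℝ, ∀ ζ : Euc N, ((c₁ * ‖ζ‖ + c₂ : ℝ) : EReal) ≤ f ζ) ∧
  HFii f ∧ HFiii f

/-- The subdifferential of an `EReal`-valued function at `ξ`. -/
def subdiffE {N : ℕ} (F : Euc N → EReal) (ξ : Euc N) : Set (Euc N) :=
  {a | ∀ ζ : Euc N, F ξ + ((⟪a, ζ - ξ⟫ : ℝ) : EReal) ≤ F ζ}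

/-!
On a convex combination `ξ = ∑ αᵢ ξᵢ` Jensen's inequality for the convex function `f**` and
`f** ≤ f` give `f**(ξ) ≤ ∑ αᵢ f**(ξᵢ) ≤ ∑ αᵢ f(ξᵢ) = f**(ξ)`; since all `αᵢ > 0`, both
inequalities are termwise equalities, so `f(ξᵢ) = f**(ξᵢ)`. Growth from below and (HF)(iii) make
`f**` finite, hence a continuous convex function on `ℝ^N`, which has a subgradient `a` at `ξ` by
Hahn–Banach applied to its strict epigraph. The affine minorant `f**(ξ) + ⟪a, · - ξ⟫` has the
same `α`-mean as `f**` over the `ξᵢ`, so it touches `f**` at every `ξᵢ`, and `a ∈ ∂f**(ξᵢ)`.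
-/

theorem Finset.eq_of_le_of_sum_mul_le {ι : Type*} {s : Finset ι} {w x y : ι → ℝ}
    (hw : ∀ i ∈ s, 0 < w i) (hxy : ∀ i ∈ s, x i ≤ y i)
    (hsum : ∑ i ∈ s, w i * y i ≤ ∑ i ∈ s, w i * x i) : ∀ i ∈ s, x i = y i := by
  have hle : ∀ i ∈ s, w i * x i ≤ w i * y i := fun i hi =>
    mul_le_mul_of_nonneg_left (hxy i hi) (hw i hi).le
  have heq := (sum_eq_sum_iff_of_le hle).1 (le_antisymm (sum_le_sum hle) hsum)
  exact fun i hi => mul_left_cancel₀ (hw i hi).ne' (heq i hi)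

namespace EReal

theorem coe_finset_sum {ι : Type*} (s : Finset ι) (x : ι → ℝ) :
    ((∑ i ∈ s, x i : ℝ) : EReal) = ∑ i ∈ s, (x i : EReal) :=
  map_sum (⟨⟨Real.toEReal, coe_zero⟩, coe_add⟩ : ℝ →+ EReal) x s

theorem coe_mul_ne_bot {a : ℝ} (ha : 0 < a) {x : EReal} (hx : x ≠ ⊥) : (a : EReal) * x ≠ ⊥ := by
  induction x using EReal.rec with
  | bot => exact absurd rfl hx
  | coe x => exact coe_mul a x ▸ coe_ne_bot _
  | top => rw [coe_mul_top_of_pos ha]; exact top_ne_bot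

theorem ne_top_of_sum_coe_mul_ne_top {ι : Type*} {s : Finset ι} {w : ι → ℝ} {x : ι → EReal}
    (hw : ∀ i ∈ s, 0 < w i) (hx : ∀ i ∈ s, x i ≠ ⊥) (hsum : ∑ i ∈ s, (w i : EReal) * x i ≠ ⊤)
    {i : ι} (hi : i ∈ s) : x i ≠ ⊤ := by
  intro htop
  have hrest : ∑ j ∈ s.erase i, (w j : EReal) * x j ≠ ⊥ :=
    Finset.sum_induction _ (· ≠ ⊥) (fun _ _ ha hb => add_ne_bot_iff.2 ⟨ha, hb⟩) zero_ne_bot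
      fun j hj => coe_mul_ne_bot (hw j (Finset.mem_of_mem_erase hj))
        (hx j (Finset.mem_of_mem_erase hj))
  apply hsum
  rw [← Finset.add_sum_erase s _ hi, htop, coe_mul_top_of_pos (hw i hi), top_add_of_ne_bot hrest]

end EReal

theorem ConvexOn.eq_of_le_of_sum_le {E ι : Type*} [AddCommGroup E] [Module ℝ E] {t : Set E}
    {g : E → ℝ} (hg : ConvexOn ℝ t g) {s : Finset ι} {w : ι → ℝ} {p : ι → E} {r : ι → ℝ}
    (hw : ∀ i ∈ s, 0 < w i) (hw₁ : ∑ i ∈ s, w i = 1) (hp : ∀ i ∈ s, p i ∈ t)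
    (hle : ∀ i ∈ s, g (p i) ≤ r i) (hr : ∑ i ∈ s, w i * r i ≤ g (∑ i ∈ s, w i • p i)) :
    ∀ i ∈ s, g (p i) = r i :=
  Finset.eq_of_le_of_sum_mul_le hw hle
    (hr.trans (hg.map_sum_le (fun i hi => (hw i hi).le) hw₁ hp))

theorem subgradient_of_sum_mul_eq {E ι : Type*} [AddCommGroup E] [Module ℝ E] {g : E → ℝ}
    {φ : E →ₗ[ℝ] ℝ} {x : E} (hφ : ∀ y, g x + φ (y - x) ≤ g y) {s : Finset ι} {w : ι → ℝ}
    {p : ι → E} (hw : ∀ i ∈ s, 0 < w i) (hw₁ : ∑ i ∈ s, w i = 1)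
    (hx : ∑ i ∈ s, w i • p i = x) (hgx : ∑ i ∈ s, w i * g (p i) = g x) :
    ∀ i ∈ s, ∀ y, g (p i) + φ (y - p i) ≤ g y := by
  have hcenter : ∑ i ∈ s, w i • (p i - x) = 0 := by
    simp only [smul_sub, Finset.sum_sub_distrib, ← Finset.sum_smul, hw₁, one_smul, hx, sub_self]
  have hmean : ∑ i ∈ s, w i * (g x + φ (p i - x)) = g x :=
    calc ∑ i ∈ s, w i * (g x + φ (p i - x))
        = (∑ i ∈ s, w i) * g x + φ (∑ i ∈ s, w i • (p i - x)) := by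
          simp only [mul_add, Finset.sum_add_distrib, Finset.sum_mul, map_sum, map_smul,
            smul_eq_mul]
      _ = g x := by rw [hw₁, hcenter, one_mul, map_zero, add_zero]
  -- The affine minorant `g x + φ (· - x)` of `g` has the same `w`-mean as `g`,
  -- so it touches `g` at every `p i`.
  have htouch := Finset.eq_of_le_of_sum_mul_le hw (fun i _ => hφ (p i)) (by rw [hmean, hgx])
  intro i hi y
  calc g (p i) + φ (y - p i) = g x + φ (y - x) := by
        rw [← htouch i hi, add_assoc, ← map_add, sub_add_sub_cancel']
    _ ≤ g y := hφ y

theorem ConvexOn.exists_subgradient {E : Type*} [NormedAddCommGroup E] [NormedSpace ℝ E]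
    {g : E → ℝ} (hg : ConvexOn ℝ univ g) (hgc : Continuous g) (x : E) :
    ∃ φ : StrongDual ℝ E, ∀ y, g x + φ (y - x) ≤ g y := by
  obtain ⟨L, hL⟩ := geometric_hahn_banach_open_point (x := (x, g x)) hg.convex_strict_epigraph
    (by simpa only [mem_univ, true_and, Function.comp_def] using
      isOpen_lt (hgc.comp continuous_fst) continuous_snd)
    (by simp)
  set c := L (0, 1)
  have hL_apply : ∀ y t, L (y, t) = L (y, 0) + t * c := fun y t => by
    rw [← smul_eq_mul, ← L.map_smul, ← map_add, Prod.smul_mk, smul_zero, smul_eq_mul, mul_one,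
      Prod.mk_add_mk, add_zero, zero_add]
  have hc : 0 < -c := by
    have := hL (x, g x + 1) (by simp)
    rw [hL_apply x (g x + 1), hL_apply x (g x)] at this
    linarith
  set φ₀ := L.comp (ContinuousLinearMap.inl ℝ E ℝ)
  refine ⟨(-c)⁻¹ • φ₀, fun y => ?_⟩
  have key : φ₀ (y - x) ≤ -c * (g y - g x) := by
    refine le_of_forall_pos_lt_add fun ε hε => ?_
    have hlt := hL (y, g y + ε / -c) (by simp [hc, hε])
    have hεc : ε / -c * c = -ε := by field_simp [neg_ne_zero.1 hc.ne']
    rw [hL_apply y, hL_apply x, add_mul, hεc] at hlt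
    simp only [φ₀, ContinuousLinearMap.comp_apply, ContinuousLinearMap.inl_apply, map_sub]
    linarith
  show g x + (-c)⁻¹ * φ₀ (y - x) ≤ g y
  rw [← le_sub_iff_add_le', inv_mul_le_iff₀ hc]
  exact key

theorem convexOn_inner_add_const {E : Type*} [NormedAddCommGroup E] [InnerProductSpace ℝ E]
    (a : E) (b : ℝ) : ConvexOn ℝ univ fun ζ => ⟪a, ζ⟫ + b :=
  ((innerₛₗ ℝ a).convexOn convex_univ).add (convexOn_const b convex_univ)

section ConvexEnvelope

variable {N : ℕ} {f : Euc N → EReal}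

theorem convEnv_le_self (f : Euc N → EReal) (x : Euc N) : convEnv f x ≤ f x :=
  sSup_le fun _ ⟨_, _, hab, hy⟩ => hy ▸ hab x

theorem affine_le_convEnv {a : Euc N} {b : ℝ} (hab : ∀ ζ, ((⟪a, ζ⟫ + b : ℝ) : EReal) ≤ f ζ)
    (x : Euc N) : ((⟪a, x⟫ + b : ℝ) : EReal) ≤ convEnv f x :=
  le_sSup ⟨a, b, hab, rfl⟩

theorem const_le_convEnv {c : ℝ} (hc : ∀ ζ, (c : EReal) ≤ f ζ) (x : Euc N) :
    (c : EReal) ≤ convEnv f x := by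
  simpa using affine_le_convEnv (a := 0) (b := c) (by simpa using hc) x

theorem convEnv_ne_top_of_mem_convexHull {s : Set (Euc N)} (hs : s.Finite)
    (hfs : ∀ ζ ∈ s, f ζ ≠ ⊤) {x : Euc N} (hx : x ∈ convexHull ℝ s) : convEnv f x ≠ ⊤ := by
  have hmax : hs.toFinset.sup f < ⊤ := (Finset.sup_lt_iff bot_lt_top).2 fun ζ hζ =>
    (hfs ζ (hs.mem_toFinset.1 hζ)).lt_top
  refine ne_top_of_le_ne_top hmax.ne (sSup_le ?_)
  rintro _ ⟨a, b, hab, rfl⟩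
  obtain ⟨ζ, hζ, hxζ⟩ :=
    (convexOn_inner_add_const a b).exists_ge_of_mem_convexHull (subset_univ s) hx
  calc ((⟪a, x⟫ + b : ℝ) : EReal) ≤ ((⟪a, ζ⟫ + b : ℝ) : EReal) := EReal.coe_le_coe hxζ
    _ ≤ f ζ := hab ζ
    _ ≤ hs.toFinset.sup f := Finset.le_sup (hs.mem_toFinset.2 hζ)

theorem convEnv_ne_top_of_HFiii (hf : HFiii f) (x : Euc N) : convEnv f x ≠ ⊤ := by
  obtain ⟨ζs, hball, hζs⟩ := hf (‖x‖ + 1) (by positivity)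
  have hclosed : IsClosed (convexHull ℝ (range ζs)) :=
    (finite_range ζs).isCompact_convexHull (𝕜 := ℝ) |>.isClosed
  have hx : x ∈ convexHull ℝ (range ζs) := by
    rw [← hclosed.closure_eq]
    exact hball (mem_closedBall_zero_iff.2 (le_add_of_nonneg_right zero_le_one))
  exact convEnv_ne_top_of_mem_convexHull (finite_range ζs)
    (forall_mem_range.2 fun j => (hζs j).2) hx

theorem convexOn_of_convEnv_eq_coe {g : Euc N → ℝ} (hg : ∀ x, convEnv f x = g x) :
    ConvexOn ℝ univ g := by
  refine ⟨convex_univ, fun x _ y _ p q hp hq hpq => ?_⟩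
  refine EReal.coe_le_coe_iff.1 (hg (p • x + q • y) ▸ sSup_le ?_)
  rintro _ ⟨a, b, hab, rfl⟩
  have hle : ∀ z, ⟪a, z⟫ + b ≤ g z := fun z =>
    EReal.coe_le_coe_iff.1 (hg z ▸ affine_le_convEnv hab z)
  refine EReal.coe_le_coe ?_
  calc ⟪a, p • x + q • y⟫ + b ≤ p • (⟪a, x⟫ + b) + q • (⟪a, y⟫ + b) :=
        (convexOn_inner_add_const a b).2 (mem_univ x) (mem_univ y) hp hq hpq
    _ ≤ p • g x + q • g y := by
        gcongr
        · exact hle x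
        · exact hle y

theorem toDual_symm_mem_subdiffE {F : Euc N → EReal} {g : Euc N → ℝ} (hF : ∀ x, F x = g x)
    {x : Euc N} {φ : StrongDual ℝ (Euc N)} (hφ : ∀ y, g x + φ (y - x) ≤ g y) :
    (InnerProductSpace.toDual ℝ (Euc N)).symm φ ∈ subdiffE F x := fun y => by
  rw [hF, hF, InnerProductSpace.toDual_symm_apply, ← EReal.coe_add]
  exact EReal.coe_le_coe (hφ y)

end ConvexEnvelope

theorem stmt5_general {N : ℕ} (f : Euc N → EReal)
    (hf : HF f) (ξ : Euc N) (k : ℕ)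
    (ξs : Fin (k + 1) → Euc N) (α : Fin (k + 1) → ℝ)
    (hpos : ∀ i, 0 < α i) (hsum : ∑ i, α i = 1) (hcomb : ∑ i, α i • ξs i = ξ)
    (hval : ∑ i, ((α i : EReal) * f (ξs i)) = convEnv f ξ) :
    (∀ i, f (ξs i) = convEnv f (ξs i)) ∧
    ∃ a : Euc N, a ∈ subdiffE (convEnv f) ξ ∧
      ∀ i, a ∈ subdiffE (convEnv f) (ξs i) := by
  obtain ⟨⟨c₁, hc₁, c₂, hgrowth⟩, -, hiii⟩ := hf
  have hlower : ∀ ζ, (c₂ : EReal) ≤ f ζ := fun ζ =>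
    (EReal.coe_le_coe (le_add_of_nonneg_left (by positivity))).trans (hgrowth ζ)
  have hfbot : ∀ ζ, f ζ ≠ ⊥ := fun ζ => ne_bot_of_le_ne_bot (EReal.coe_ne_bot c₂) (hlower ζ)
  set g := fun x => (convEnv f x).toReal
  have hg : ∀ x, convEnv f x = g x := fun x => (EReal.coe_toReal (convEnv_ne_top_of_HFiii hiii x)
    (ne_bot_of_le_ne_bot (EReal.coe_ne_bot c₂) (const_le_convEnv hlower x))).symm
  have hgconv : ConvexOn ℝ univ g := convexOn_of_convEnv_eq_coe hg
  have hfin : ∀ i, f (ξs i) ≠ ⊤ := fun i =>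
    EReal.ne_top_of_sum_coe_mul_ne_top (fun i _ => hpos i) (fun i _ => hfbot (ξs i))
      (hval ▸ hg ξ ▸ EReal.coe_ne_top _) (Finset.mem_univ i)
  set r := fun i => (f (ξs i)).toReal
  have hr : ∀ i, f (ξs i) = r i := fun i => (EReal.coe_toReal (hfin i) (hfbot _)).symm
  have hr_mean : ∑ i, α i * r i = g ξ := by
    rw [← EReal.coe_eq_coe_iff, EReal.coe_finset_sum, ← hg, ← hval]
    simp only [EReal.coe_mul, hr]
  have hgr : ∀ i, g (ξs i) = r i := fun i =>
    hgconv.eq_of_le_of_sum_le (fun i _ => hpos i) hsum (fun i _ => mem_univ _)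
      (fun i _ => EReal.coe_le_coe_iff.1 (hg _ ▸ hr i ▸ convEnv_le_self f (ξs i)))
      (by rw [hcomb, hr_mean]) i (Finset.mem_univ i)
  have hgcont : Continuous g := continuousOn_univ.1 (hgconv.continuousOn isOpen_univ)
  obtain ⟨φ, hφ⟩ := hgconv.exists_subgradient hgcont ξ
  have hφi := subgradient_of_sum_mul_eq (φ := (φ : Euc N →ₗ[ℝ] ℝ)) hφ (fun i _ => hpos i) hsum
    hcomb (by simp only [hgr, hr_mean])
  exact ⟨fun i => by rw [hr, hg, hgr], _, toDual_symm_mem_subdiffE hg hφ,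
    fun i => toDual_symm_mem_subdiffE hg (hφi i (Finset.mem_univ i))⟩

/-- Lemma 2.4 (b): under assumption (HF), if `ξ` is a strictly positive convex combination of
`ξ₁, …, ξ_{k+1}` along which the values of `f` average to `f**(ξ)`, then `f(ξᵢ) = f**(ξᵢ)`
for every `i` and there is a common subgradient `a ∈ ∂f**(ξ) ∩ ⋂ᵢ ∂f**(ξᵢ)`. -/
theorem stmt5 {N : ℕ} (f : Euc N → EReal) (hfmeas : Measurable f) (hfbot : ∀ ζ, f ζ ≠ ⊥)
    (hf : HF f) (ξ : Euc N) (k : ℕ) (hk : 1 ≤ k) (hkN : k ≤ N)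
    (ξs : Fin (k + 1) → Euc N) (α : Fin (k + 1) → ℝ)
    (hpos : ∀ i, 0 < α i) (hsum : ∑ i, α i = 1) (hcomb : ∑ i, α i • ξs i = ξ)
    (hval : ∑ i, ((α i : EReal) * f (ξs i)) = convEnv f ξ) :
    (∀ i, f (ξs i) = convEnv f (ξs i)) ∧
    ∃ a : Euc N, a ∈ subdiffE (convEnv f) ξ ∧
      ∀ i, a ∈ subdiffE (convEnv f) (ξs i) :=
  stmt5_general f hf ξ k ξs α hpos hsum hcomb hval
end
end

section
/- Let f : ℝ^N → ℝ ∪ {+∞} be a Borel function whose lower semicontinuous convex envelope f** is real-valued on ℝ^N, and suppose that every face 𝓕 of the epigraph of f** satisfies 𝓕 = co{(η, f**(η)) : f**(η) = f(η) and (η, f**(η)) ∈ 𝓕}. Then f satisfies condition (HF)(ii): for every ξ ∈ ℝ^N either f**(ξ) = f(ξ) or there exist k ∈ {1,…,N}, vectors ξ₁,…,ξ_{k+1} ∈ ℝ^N and strictly positive reals α₁,…,α_{k+1} with Σᵢ αᵢ = 1, Σᵢ αᵢ ξᵢ = ξ, Σᵢ αᵢ f(ξᵢ) = f**(ξ), and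 dim span(ξ₁,…,ξ_{k+1}) = k. -/
open MeasureTheory Set Filter Topology RealInnerProductSpace
open scoped Classical

set_option maxHeartbeats 1000000

noncomputable section

lemma ecoe_sum {ι : Type*} (t : Finset ι) (h : ι → ℝ) :
    ((∑ i ∈ t, h i : ℝ) : EReal) = ∑ i ∈ t, ((h i : ℝ) : EReal) :=
  map_sum (⟨⟨Real.toEReal, EReal.coe_zero⟩, EReal.coe_add⟩ : ℝ →+ EReal) h t

lemma pad_sum {E : Type*} {m : ℕ} (i0 : Fin m) (ξs : Fin m → E) (α : Fin m → ℝ)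
    {V : Type*} [AddCommMonoid V] [Module ℝ V] (φ : E → V) :
    ∑ i : Fin (m+1), ((Fin.cons (α i0 / 2) (Function.update α i0 (α i0 / 2)) : Fin (m+1) → ℝ) i) •
        φ ((Fin.cons (ξs i0) ξs : Fin (m+1) → E) i) = ∑ i, α i • φ (ξs i) := by
  rw [Fin.sum_univ_succ]
  simp only [Fin.cons_zero, Fin.cons_succ]
  have h1 : (fun i => Function.update α i0 (α i0 / 2) i • φ (ξs i)) =
      Function.update (fun i => α i • φ (ξs i)) i0 ((α i0 / 2) • φ (ξs i0)) := by
    funext i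
    by_cases h : i = i0
    · subst h; simp
    · simp [Function.update_of_ne h]
  rw [h1, Finset.sum_update_of_mem (Finset.mem_univ i0), ← add_assoc, ← add_smul, add_halves,
    Finset.sdiff_singleton_eq_erase]
  exact Finset.add_sum_erase Finset.univ (fun x => α x • φ (ξs x)) (Finset.mem_univ i0)

lemma pad_pos {m : ℕ} (i0 : Fin m) (α : Fin m → ℝ) (h : ∀ i, 0 < α i) :
    ∀ i, 0 < (Fin.cons (α i0 / 2) (Function.update α i0 (α i0 / 2)) : Fin (m+1) → ℝ) i := by
  intro i
  refine Fin.cases ?_ (fun j => ?_) i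
  · simpa using half_pos (h i0)
  · simp only [Fin.cons_succ]
    by_cases hj : j = i0
    · rw [hj, Function.update_self]; exact half_pos (h i0)
    · simpa [Function.update_of_ne hj] using h j

lemma pad_range {E : Type*} {m : ℕ} (i0 : Fin m) (ξs : Fin m → E) :
    Set.range (Fin.cons (ξs i0) ξs : Fin (m+1) → E) = Set.range ξs := by
  rw [Fin.range_cons, Set.insert_eq_self]
  exact Set.mem_range_self i0

variable {N : ℕ} {f : Euc N → EReal} {g : Euc N → ℝ}

lemma minorant_le (hg : ∀ ξ, convEnv f ξ = (g ξ : EReal)) (a : Euc N) (b : ℝ)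
    (hab : ∀ ζ : Euc N, ((⟪a, ζ⟫ + b : ℝ) : EReal) ≤ f ζ) (ζ : Euc N) :
    ⟪a, ζ⟫ + b ≤ g ζ := by
  have h1 : ((⟪a, ζ⟫ + b : ℝ) : EReal) ≤ convEnv f ζ := le_sSup ⟨a, b, hab, rfl⟩
  rw [hg] at h1
  exact_mod_cast h1

lemma jensen (hg : ∀ ξ, convEnv f ξ = (g ξ : EReal)) {ι : Type*} (t : Finset ι) (w : ι → ℝ)
    (z : ι → Euc N) (ξ : Euc N) (hw : ∀ i ∈ t, 0 ≤ w i) (hw1 : ∑ i ∈ t, w i = 1)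
    (hz : ∑ i ∈ t, w i • z i = ξ) : g ξ ≤ ∑ i ∈ t, w i * g (z i) := by
  have h1 : convEnv f ξ ≤ ((∑ i ∈ t, w i * g (z i) : ℝ) : EReal) := by
    apply sSup_le
    rintro y ⟨a, b, hab, rfl⟩
    apply EReal.coe_le_coe_iff.mpr
    have hx : ⟪a, ξ⟫ + b = ∑ i ∈ t, w i * (⟪a, z i⟫ + b) := by
      rw [← hz, inner_sum]
      simp_rw [real_inner_smul_right, mul_add]
      rw [Finset.sum_add_distrib, ← Finset.sum_mul, hw1, one_mul]
    rw [hx]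
    exact Finset.sum_le_sum fun i hi =>
      mul_le_mul_of_nonneg_left (minorant_le hg a b hab (z i)) (hw i hi)
  rw [hg] at h1
  exact_mod_cast h1

lemma build (hg : ∀ ζ, convEnv f ζ = (g ζ : EReal)) (ξ : Euc N) (m : ℕ)
    (ξs : Fin m → Euc N) (α : Fin m → ℝ)
    (hpos : ∀ i, 0 < α i) (h1 : ∑ i, α i = 1) (hx : ∑ i, α i • ξs i = ξ)
    (hgs : ∑ i, α i * g (ξs i) = g ξ) (hc : ∀ i, (g (ξs i) : EReal) = f (ξs i))
    (hrank : Module.finrank ℝ (Submodule.span ℝ (Set.range ξs)) + 1 = m)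
    (hr1 : 1 ≤ Module.finrank ℝ (Submodule.span ℝ (Set.range ξs))) :
    ∃ k : ℕ, 1 ≤ k ∧ k ≤ N ∧
      ∃ (ξs : Fin (k + 1) → Euc N) (α : Fin (k + 1) → ℝ),
        (∀ i, 0 < α i) ∧ (∑ i, α i = 1) ∧ (∑ i, α i • ξs i = ξ) ∧
        (∑ i, ((α i : EReal) * f (ξs i)) = convEnv f ξ) ∧
        Module.finrank ℝ (Submodule.span ℝ (Set.range ξs)) = k := by
  set k := Module.finrank ℝ (Submodule.span ℝ (Set.range ξs)) with hk
  have hkN : k ≤ N := by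
    calc k ≤ Module.finrank ℝ (Euc N) := Submodule.finrank_le _
    _ = N := finrank_euclideanSpace_fin
  have hcast : k + 1 = m := hrank
  refine ⟨k, hr1, hkN, ξs ∘ Fin.cast hcast, α ∘ Fin.cast hcast, fun i => hpos _, ?_, ?_, ?_, ?_⟩
  · rw [← h1]; exact Equiv.sum_comp (finCongr hcast) α
  · rw [← hx]; exact Equiv.sum_comp (finCongr hcast) (fun i => α i • ξs i)
  · have e1 : ∑ i : Fin (k+1), ((α ∘ Fin.cast hcast) i : EReal) * f ((ξs ∘ Fin.cast hcast) i)
        = ∑ i : Fin (k+1), ((((α ∘ Fin.cast hcast) i) * g ((ξs ∘ Fin.cast hcast) i) : ℝ) : EReal) := by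
      refine Finset.sum_congr rfl fun i _ => ?_
      simp only [Function.comp_apply]
      rw [← hc (Fin.cast hcast i), ← EReal.coe_mul]
    rw [e1, ← ecoe_sum]
    have e2 : ∑ i : Fin (k+1), (α ∘ Fin.cast hcast) i * g ((ξs ∘ Fin.cast hcast) i)
        = ∑ i, α i * g (ξs i) := Equiv.sum_comp (finCongr hcast) (fun i => α i * g (ξs i))
    rw [e2, hgs, hg]
  · have : Set.range (ξs ∘ Fin.cast hcast) = Set.range ξs := by
      have hsurj : Function.Surjective (Fin.cast hcast) := fun j => ⟨Fin.cast hcast.symm j, by simp⟩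
      rw [Set.range_comp, hsurj.range_eq, Set.image_univ]
    rw [this]

lemma key (hg : ∀ ζ, convEnv f ζ = (g ζ : EReal)) :
    ∀ n : ℕ, ∀ {ι : Type} (t : Finset ι) (w : ι → ℝ) (z : ι → Euc N) (ξ : Euc N),
      t.card = n → t.Nonempty → (∀ i ∈ t, 0 < w i) → (∑ i ∈ t, w i = 1) →
      (∑ i ∈ t, w i • z i = ξ) → (∑ i ∈ t, w i * g (z i) = g ξ) →
      (∀ i ∈ t, (g (z i) : EReal) = f (z i)) →
      (convEnv f ξ = f ξ ∨
        ∃ k : ℕ, 1 ≤ k ∧ k ≤ N ∧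
          ∃ (ξs : Fin (k + 1) → Euc N) (α : Fin (k + 1) → ℝ),
            (∀ i, 0 < α i) ∧ (∑ i, α i = 1) ∧ (∑ i, α i • ξs i = ξ) ∧
            (∑ i, ((α i : EReal) * f (ξs i)) = convEnv f ξ) ∧
            Module.finrank ℝ (Submodule.span ℝ (Set.range ξs)) = k) := by
  intro n
  induction n using Nat.strong_induction_on with
  | _ n IH =>
  intro ι t w z ξ hcard hne hw hw1 hwz hwg hcontact
  set r := Module.finrank ℝ (Submodule.span ℝ (z '' (t : Set ι))) with hr
  rcases Nat.eq_zero_or_pos r with hr0 | hrpos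
  · -- rank zero: all points are the origin
    left
    have hspan : Submodule.span ℝ (z '' (t : Set ι)) = ⊥ := by
      apply Submodule.finrank_eq_zero.mp
      rw [← hr]; exact hr0
    have hz0 : ∀ i ∈ t, z i = 0 := by
      intro i hi
      have : z i ∈ Submodule.span ℝ (z '' (t : Set ι)) :=
        Submodule.subset_span (Set.mem_image_of_mem z hi)
      rw [hspan, Submodule.mem_bot] at this
      exact this
    have hξ0 : ξ = 0 := by
      rw [← hwz]
      exact Finset.sum_eq_zero fun i hi => by rw [hz0 i hi, smul_zero]
    obtain ⟨i₀, hi₀⟩ := hne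
    have := hcontact i₀ hi₀
    rw [hz0 i₀ hi₀] at this
    rw [hξ0, hg, this]
  · -- rank at least one
    have hrt : r ≤ t.card := by
      have h1 : Module.finrank ℝ (Submodule.span ℝ ((t.image z : Finset (Euc N)) : Set (Euc N)))
          ≤ (t.image z).card := finrank_span_finset_le_card (t.image z)
      rw [Finset.coe_image] at h1
      exact le_trans (hr ▸ h1) (Finset.card_image_le)
    by_cases hcc : t.card ≤ r + 1
    · -- terminal case: enumerate the points
      have hne' : 0 < t.card := Finset.card_pos.mpr hne
      have e : Fin t.card ≃ {x // x ∈ t} := t.equivFin.symm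
      set zs : Fin t.card → Euc N := fun i => z (e i) with hzs
      set αs : Fin t.card → ℝ := fun i => w (e i) with hαs
      have hsum : ∀ {M : Type} [AddCommMonoid M] (F : ι → M),
          (∑ i : Fin t.card, F ((e i : ι))) = ∑ j ∈ t, F j := by
        intro M _ F
        rw [Equiv.sum_comp e (fun (j : {x // x ∈ t}) => F (j : ι))]
        exact Finset.sum_coe_sort t F
      have hrange : Set.range zs = z '' (t : Set ι) := by
        have h1 : Set.range zs = Set.range ((z ∘ (Subtype.val : {x // x ∈ t} → ι)) ∘ ⇑e) := rfl
        rw [h1, e.surjective.range_comp, Set.range_comp, Subtype.range_coe_subtype]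
        rfl
      have hrank : Module.finrank ℝ (Submodule.span ℝ (Set.range zs)) = r := by
        rw [hrange, ← hr]
      have hpos : ∀ i, 0 < αs i := fun i => hw _ (e i).2
      have h1 : ∑ i, αs i = 1 := by rw [hαs]; rw [hsum w]; exact hw1
      have hx : ∑ i, αs i • zs i = ξ := by
        rw [← hwz]; exact hsum (fun j => w j • z j)
      have hgs : ∑ i, αs i * g (zs i) = g ξ := by
        rw [← hwg]; exact hsum (fun j => w j * g (z j))
      have hc : ∀ i, (g (zs i) : EReal) = f (zs i) := fun i => hcontact _ (e i).2
      rcases eq_or_lt_of_le hcc with hEq | hlt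
      · -- card = r + 1
        right
        exact build hg ξ t.card zs αs hpos h1 hx hgs hc (by rw [hrank]; omega) (hrank ▸ hrpos)
      · -- card = r : pad with a duplicated point
        have hEq : t.card = r := le_antisymm (by omega) hrt
        right
        set i0 : Fin t.card := ⟨0, hne'⟩
        refine build hg ξ (t.card + 1) (Fin.cons (zs i0) zs)
          (Fin.cons (αs i0 / 2) (Function.update αs i0 (αs i0 / 2)))
          (pad_pos i0 αs hpos) ?_ ?_ ?_ ?_ ?_ ?_
        · have := pad_sum i0 zs αs (fun _ => (1 : ℝ))
          simpa only [smul_eq_mul, mul_one, h1] using this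
        · have := pad_sum i0 zs αs (id : Euc N → Euc N)
          simpa only [id_eq, hx] using this
        · have := pad_sum i0 zs αs g
          simpa only [smul_eq_mul, hgs] using this
        · intro i
          have hmem : (Fin.cons (zs i0) zs : Fin (t.card+1) → Euc N) i ∈ Set.range zs := by
            rw [← pad_range i0 zs]; exact Set.mem_range_self i
          obtain ⟨j, hj⟩ := hmem
          rw [← hj]; exact hc j
        · rw [pad_range i0 zs, hrank, hEq]
        · rw [pad_range i0 zs, hrank]; exact hrpos
    · -- reduction case: too many points, eliminate one
      push_neg at hcc
      -- the lifted family (z i, 1) is linearly dependent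
      have hnli : ¬ LinearIndependent ℝ (fun i : {x // x ∈ t} =>
          (((⟨z i, Submodule.subset_span (Set.mem_image_of_mem z i.2)⟩ :
            Submodule.span ℝ (z '' (t : Set ι))), (1 : ℝ)) :
            (Submodule.span ℝ (z '' (t : Set ι))) × ℝ)) := by
        intro h
        have hle := h.fintype_card_le_finrank
        rw [Fintype.card_coe, Module.finrank_prod, Module.finrank_self, ← hr] at hle
        omega
      rw [Fintype.not_linearIndependent_iff] at hnli
      obtain ⟨c, hcsum, i₁, hci₁⟩ := hnli
      set C : ι → ℝ := fun i => if h : i ∈ t then c ⟨i, h⟩ else 0 with hC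
      have hCc : ∀ j : {x // x ∈ t}, C (j : ι) = c j := by
        intro j; rw [hC]; simp only [j.2, dif_pos]
      have hCz : ∑ i ∈ t, C i • z i = 0 := by
        have h1 := congrArg Prod.fst hcsum
        simp only [Prod.fst_sum, Prod.smul_fst, Prod.fst_zero] at h1
        have h2 := congrArg (Subtype.val : Submodule.span ℝ (z '' (t : Set ι)) → Euc N) h1
        push_cast at h2
        rw [← Finset.sum_coe_sort t (fun i => C i • z i)]
        rw [show (fun (j : {x // x ∈ t}) => C (j : ι) • z (j : ι))
            = fun (j : {x // x ∈ t}) => c j • z (j : ι) from funext fun j => by rw [hCc j]]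
        exact h2
      have hC1 : ∑ i ∈ t, C i = 0 := by
        have h1 := congrArg Prod.snd hcsum
        simp only [Prod.snd_sum, Prod.smul_snd, Prod.snd_zero, smul_eq_mul, mul_one] at h1
        rw [← Finset.sum_coe_sort t C]
        rw [show (fun (j : {x // x ∈ t}) => C (j : ι)) = fun (j : {x // x ∈ t}) => c j
          from funext fun j => hCc j]
        exact h1
      have hCne : ∃ i ∈ t, C i ≠ 0 := ⟨(i₁ : ι), i₁.2, by rw [hCc i₁]; exact hci₁⟩
      -- the relation also annihilates the g-values (else Jensen is violated)
      have hCg : ∑ i ∈ t, C i * g (z i) = 0 := by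
        by_contra hne0
        set σ : ℝ := if 0 < ∑ j ∈ t, C j * g (z j) then 1 else -1 with hσ
        set D : ι → ℝ := fun i => σ * C i with hD
        have hDz : ∑ i ∈ t, D i • z i = 0 := by
          simp only [hD, mul_smul]
          rw [← Finset.smul_sum, hCz, smul_zero]
        have hD1 : ∑ i ∈ t, D i = 0 := by
          simp only [hD]
          rw [← Finset.mul_sum, hC1, mul_zero]
        have hDg : 0 < ∑ i ∈ t, D i * g (z i) := by
          simp only [hD, mul_assoc]
          rw [← Finset.mul_sum]
          by_cases hsgn : 0 < ∑ j ∈ t, C j * g (z j)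
          · rw [hσ, if_pos hsgn, one_mul]; exact hsgn
          · rw [hσ, if_neg hsgn, neg_one_mul]
            push_neg at hsgn
            exact neg_pos.mpr (lt_of_le_of_ne hsgn hne0)
        set m0 := t.inf' hne w with hm0def
        have hm0 : 0 < m0 := by
          rw [hm0def, Finset.lt_inf'_iff]
          exact fun i hi => hw i hi
        set M0 := t.sup' hne (fun i => |D i|) with hM0def
        have hM0 : 0 ≤ M0 := by
          obtain ⟨i₂, hi₂⟩ := hne
          exact le_trans (abs_nonneg (D i₂)) (Finset.le_sup' (fun i => |D i|) hi₂)
        set t0 := m0 / (M0 + 1) with ht0def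
        have ht0 : 0 < t0 := div_pos hm0 (by linarith)
        have ht0M : t0 * M0 < m0 := by
          have h3 : t0 * (M0 + 1) = m0 := div_mul_cancel₀ _ (by linarith)
          nlinarith
        have hβ : ∀ i ∈ t, 0 ≤ w i - t0 * D i := by
          intro i hi
          have h1 : |D i| ≤ M0 := Finset.le_sup' (fun j => |D j|) hi
          have h2 : m0 ≤ w i := Finset.inf'_le _ hi
          have h4 : t0 * D i ≤ t0 * M0 :=
            mul_le_mul_of_nonneg_left (le_trans (le_abs_self _) h1) (le_of_lt ht0)
          linarith
        have hβ1 : ∑ i ∈ t, (w i - t0 * D i) = 1 := by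
          rw [Finset.sum_sub_distrib, ← Finset.mul_sum, hD1, mul_zero, sub_zero, hw1]
        have hβz : ∑ i ∈ t, (w i - t0 * D i) • z i = ξ := by
          have hterm : ∀ i, (w i - t0 * D i) • z i = w i • z i - t0 • (D i • z i) := by
            intro i; rw [sub_smul, smul_smul]
          simp_rw [hterm]
          rw [Finset.sum_sub_distrib, ← Finset.smul_sum, hDz, smul_zero, sub_zero, hwz]
        have hJ := jensen hg t (fun i => w i - t0 * D i) z ξ hβ hβ1 hβz
        have hsplit : ∑ i ∈ t, (w i - t0 * D i) * g (z i)
            = g ξ - t0 * ∑ i ∈ t, D i * g (z i) := by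
          simp_rw [sub_mul, mul_assoc]
          rw [Finset.sum_sub_distrib, ← Finset.mul_sum, hwg]
        rw [hsplit] at hJ
        nlinarith
      -- eliminate (at least) one point
      have hPos : ∃ i ∈ t, 0 < C i := by
        by_contra hall
        push_neg at hall
        obtain ⟨i₂, hi₂t, hi₂⟩ := hCne
        have hlt : ∑ i ∈ t, C i < ∑ i ∈ t, (0 : ℝ) :=
          Finset.sum_lt_sum hall ⟨i₂, hi₂t, lt_of_le_of_ne (hall i₂ hi₂t) hi₂⟩
        rw [hC1, Finset.sum_const_zero] at hlt
        exact lt_irrefl _ hlt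
      set P := t.filter (fun i => 0 < C i) with hP
      have hPne : P.Nonempty := by
        obtain ⟨i₂, hi₂t, hi₂⟩ := hPos
        exact ⟨i₂, Finset.mem_filter.mpr ⟨hi₂t, hi₂⟩⟩
      obtain ⟨i₀, hi₀P, hi₀⟩ := Finset.exists_mem_eq_inf' hPne (fun i => w i / C i)
      have hi₀t : i₀ ∈ t := (Finset.mem_filter.mp hi₀P).1
      have hi₀C : 0 < C i₀ := (Finset.mem_filter.mp hi₀P).2
      have htsle : ∀ i ∈ P, w i₀ / C i₀ ≤ w i / C i := by
        intro i hi
        rw [← hi₀]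
        exact Finset.inf'_le _ hi
      have htspos : 0 < w i₀ / C i₀ := div_pos (hw i₀ hi₀t) hi₀C
      set β : ι → ℝ := fun i => w i - (w i₀ / C i₀) * C i with hβdef
      have hβ0 : ∀ i ∈ t, 0 ≤ β i := by
        intro i hi
        by_cases hCi : 0 < C i
        · have h1 : w i₀ / C i₀ ≤ w i / C i := htsle i (Finset.mem_filter.mpr ⟨hi, hCi⟩)
          have h2 : (w i₀ / C i₀) * C i ≤ w i := by
            rw [le_div_iff₀ hCi] at h1
            exact h1
          simp only [hβdef]
          linarith
        · push_neg at hCi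
          have h1 : (w i₀ / C i₀) * C i ≤ 0 :=
            mul_nonpos_of_nonneg_of_nonpos (le_of_lt htspos) hCi
          have h2 := hw i hi
          simp only [hβdef]
          linarith
      have hβi₀ : β i₀ = 0 := by
        simp only [hβdef]
        rw [div_mul_cancel₀ _ (ne_of_gt hi₀C), sub_self]
      set s' := t.filter (fun i => 0 < β i) with hs'
      have hsub : s' ⊆ t := Finset.filter_subset _ _
      have hzero : ∀ i ∈ t, i ∉ s' → β i = 0 := by
        intro i hi hni
        have hnp : ¬ 0 < β i := fun h => hni (Finset.mem_filter.mpr ⟨hi, h⟩)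
        exact le_antisymm (not_lt.mp hnp) (hβ0 i hi)
      have hi₀ns' : i₀ ∉ s' := fun h => by
        have := (Finset.mem_filter.mp h).2
        rw [hβi₀] at this
        exact lt_irrefl _ this
      have hcard' : s'.card < n := by
        rw [← hcard]
        exact Finset.card_lt_card ((Finset.ssubset_iff_of_subset hsub).mpr ⟨i₀, hi₀t, hi₀ns'⟩)
      have e1 : ∑ i ∈ s', β i = 1 := by
        rw [Finset.sum_subset hsub (fun i hi hni => hzero i hi hni)]
        simp only [hβdef]
        rw [Finset.sum_sub_distrib, ← Finset.mul_sum, hC1, mul_zero, sub_zero, hw1]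
      have e2 : ∑ i ∈ s', β i • z i = ξ := by
        rw [Finset.sum_subset hsub (fun i hi hni => by rw [hzero i hi hni, zero_smul])]
        simp only [hβdef]
        have hterm : ∀ i, (w i - (w i₀ / C i₀) * C i) • z i
            = w i • z i - (w i₀ / C i₀) • (C i • z i) := by
          intro i; rw [sub_smul, smul_smul]
        simp_rw [hterm]
        rw [Finset.sum_sub_distrib, ← Finset.smul_sum, hCz, smul_zero, sub_zero, hwz]
      have e3 : ∑ i ∈ s', β i * g (z i) = g ξ := by
        rw [Finset.sum_subset hsub (fun i hi hni => by rw [hzero i hi hni, zero_mul])]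
        simp only [hβdef]
        simp_rw [sub_mul, mul_assoc]
        rw [Finset.sum_sub_distrib, ← Finset.mul_sum, hCg, mul_zero, sub_zero, hwg]
      have hs'ne : s'.Nonempty := by
        rcases Finset.eq_empty_or_nonempty s' with h | h
        · rw [h, Finset.sum_empty] at e1; norm_num at e1
        · exact h
      exact IH s'.card hcard' s' β z ξ rfl hs'ne
        (fun i hi => (Finset.mem_filter.mp hi).2) e1 e2 e3
        (fun i hi => hcontact i (hsub hi))

/-- Example 2.1: if `f**` is real valued (witnessed by `g : ℝ^N → ℝ`) and every face `F` of
the epigraph of `f**` is the convex hull of its points `(η, f**(η))` with `f**(η) = f(η)`,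
then `f` satisfies condition (HF)(ii). -/
theorem stmt7 {N : ℕ} (f : Euc N → EReal) (hfmeas : Measurable f) (hfbot : ∀ ζ, f ζ ≠ ⊥)
    (g : Euc N → ℝ) (hg : ∀ ξ, convEnv f ξ = (g ξ : EReal))
    (hface : ∀ F : Set (Euc N × ℝ), Convex ℝ F →
      IsExtreme ℝ {p : Euc N × ℝ | g p.1 ≤ p.2} F →
      F = convexHull ℝ
        {p : Euc N × ℝ | p ∈ F ∧ ∃ η : Euc N, p = (η, g η) ∧ (g η : EReal) = f η}) :
    HFii f := by
  intro ξ
  have gconvex : ConvexOn ℝ (Set.univ : Set (Euc N)) g := by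
    refine ⟨convex_univ, ?_⟩
    intro x _ y _ a b ha hb hab
    have hj := jensen hg (Finset.univ : Finset (Fin 2)) ![a, b] ![x, y] (a • x + b • y)
      (by intro i _; fin_cases i <;> simpa)
      (by simp [Fin.sum_univ_two, hab])
      (by simp [Fin.sum_univ_two])
    simpa [Fin.sum_univ_two, smul_eq_mul] using hj
  have hepi : Convex ℝ {p : Euc N × ℝ | g p.1 ≤ p.2} := by
    have h := gconvex.convex_epigraph
    have hset : {p : Euc N × ℝ | p.1 ∈ (Set.univ : Set (Euc N)) ∧ g p.1 ≤ p.2}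
        = {p : Euc N × ℝ | g p.1 ≤ p.2} := by
      ext p; simp
    rwa [hset] at h
  have hF := hface _ hepi (IsExtreme.refl ℝ _)
  have hmem : ((ξ, g ξ) : Euc N × ℝ) ∈ convexHull ℝ
      {p : Euc N × ℝ | p ∈ {p : Euc N × ℝ | g p.1 ≤ p.2} ∧
        ∃ η : Euc N, p = (η, g η) ∧ (g η : EReal) = f η} := by
    rw [← hF]
    exact le_refl (g ξ)
  rw [convexHull_eq] at hmem
  obtain ⟨ι, t, w, zp, hw0, hw1, hzS, hcm⟩ := hmem
  rw [Finset.centerMass_eq_of_sum_1 _ _ hw1] at hcm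
  have hfst : ∑ i ∈ t, w i • (zp i).1 = ξ := by
    have h := congrArg Prod.fst hcm
    rw [Prod.fst_sum] at h
    simpa [Prod.smul_fst] using h
  have hsnd : ∑ i ∈ t, w i * (zp i).2 = g ξ := by
    have h := congrArg Prod.snd hcm
    rw [Prod.snd_sum] at h
    simpa [Prod.smul_snd, smul_eq_mul] using h
  have hcontact : ∀ i ∈ t, (zp i).2 = g ((zp i).1) ∧ (g ((zp i).1) : EReal) = f ((zp i).1) := by
    intro i hi
    obtain ⟨-, η, hpe, hgf⟩ := hzS i hi
    rw [hpe]
    exact ⟨rfl, hgf⟩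
  set t' := t.filter (fun i => 0 < w i) with ht'
  have hsub : t' ⊆ t := Finset.filter_subset _ _
  have hzero : ∀ i ∈ t, i ∉ t' → w i = 0 := by
    intro i hi hni
    have hnp : ¬ 0 < w i := fun h => hni (Finset.mem_filter.mpr ⟨hi, h⟩)
    exact le_antisymm (not_lt.mp hnp) (hw0 i hi)
  have h1' : ∑ i ∈ t', w i = 1 := by
    rw [Finset.sum_subset hsub (fun i hi hni => hzero i hi hni)]
    exact hw1
  have hz' : ∑ i ∈ t', w i • (zp i).1 = ξ := by
    rw [Finset.sum_subset hsub (fun i hi hni => by rw [hzero i hi hni, zero_smul])]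
    exact hfst
  have hgl' : ∑ i ∈ t', w i * g ((zp i).1) = g ξ := by
    rw [Finset.sum_subset hsub (fun i hi hni => by rw [hzero i hi hni, zero_mul])]
    rw [← hsnd]
    exact Finset.sum_congr rfl fun i hi => by rw [(hcontact i hi).1]
  have ht'ne : t'.Nonempty := by
    rcases Finset.eq_empty_or_nonempty t' with h | h
    · rw [h, Finset.sum_empty] at h1'; norm_num at h1'
    · exact h
  exact key hg t'.card t' w (fun i => (zp i).1) ξ rfl ht'ne
    (fun i hi => (Finset.mem_filter.mp hi).2) h1' hz' hgl'
    (fun i hi => (hcontact i (hsub hi)).2)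
end
end

section
/- Define g : [0,∞) → ℝ by g(t) = |t² − 1| for t ≠ 1 and g(1) = 1, and let f : ℝ^N → ℝ be f(η) = g(|η|). Then f**(η) = 0 for every η in the closed unit ball B̄(0,1), while f(η) > 0 for every η ∈ ℝ^N; consequently f does not satisfy condition (HF)(ii): for ξ = 0 one has f**(0) = 0 < f(0), yet there exist no k ≥ 1, vectors ξ₁,…,ξ_{k+1} ∈ ℝ^N and strictly positive reals α₁,…,α_{k+1} with Σᵢ αᵢ = 1, Σᵢ αᵢ ξᵢ = 0 and Σᵢ αᵢ f(ξᵢ) = 0. -/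
open MeasureTheory Set Filter Topology RealInnerProductSpace
open scoped Classical

noncomputable section

/-- The radial function of Example 2.3: `f(η) = g(‖η‖)` where `g(t) = |t² − 1|` for `t ≠ 1`
and `g(1) = 1`. -/
def fex (N : ℕ) : Euc N → ℝ :=
  fun η => if ‖η‖ = 1 then 1 else |‖η‖ ^ 2 - 1|

section Aux
variable {N : ℕ}

lemma fex_pos (η : Euc N) : 0 < fex N η := by
  unfold fex
  split_ifs with h
  · norm_num
  · rw [abs_pos, sub_ne_zero]
    intro h2
    apply h
    have h0 := norm_nonneg η
    have hz : (‖η‖ - 1) * (‖η‖ + 1) = 0 := by nlinarith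
    rcases mul_eq_zero.1 hz with h3 | h3
    · linarith
    · linarith

lemma fex_val (η : Euc N) (h : ‖η‖ ≠ 1) : fex N η = |‖η‖ ^ 2 - 1| := by
  unfold fex; rw [if_neg h]

lemma minor_nonpos (hN : 1 ≤ N) (a : Euc N) (b : ℝ)
    (hab : ∀ ζ : Euc N, ⟪a, ζ⟫ + b ≤ fex N ζ)
    (η : Euc N) (hη : ‖η‖ ≤ 1) : ⟪a, η⟫ + b ≤ 0 := by
  obtain ⟨u, hu, hau⟩ : ∃ u : Euc N, ‖u‖ = 1 ∧ ⟪a, η⟫ ≤ ⟪a, u⟫ := by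
    by_cases ha : a = 0
    · refine ⟨EuclideanSpace.single ⟨0, hN⟩ 1, ?_, ?_⟩
      · simp [EuclideanSpace.norm_single]
      · simp [ha]
    · refine ⟨‖a‖⁻¹ • a, ?_, ?_⟩
      · rw [norm_smul]
        simp [norm_ne_zero_iff.2 ha]
      · rw [real_inner_smul_right, real_inner_self_eq_norm_sq]
        have hna : (0:ℝ) < ‖a‖ := norm_pos_iff.2 ha
        have h1 : ⟪a, η⟫ ≤ ‖a‖ * ‖η‖ := real_inner_le_norm a η
        have h2 : ‖a‖ * ‖η‖ ≤ ‖a‖ := by nlinarith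
        have h3 : ‖a‖⁻¹ * ‖a‖ ^ 2 = ‖a‖ := by field_simp
        linarith [h3]
  suffices hs : ⟪a, u⟫ + b ≤ 0 by linarith
  by_contra hpos
  push_neg at hpos
  set c := ⟪a, u⟫ with hc
  have hδ0 : 0 < c + b := hpos
  set m := min (1/2 : ℝ) ((c + b) / (|c| + 3)) with hm
  have hm0 : 0 < m := lt_min (by norm_num) (div_pos hδ0 (by positivity))
  have hm2 : m ≤ 1/2 := min_le_left _ _
  have hm3 : m * (|c| + 3) ≤ c + b := by
    have hle := min_le_right (1/2 : ℝ) ((c + b) / (|c| + 3))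
    have hden : (0:ℝ) < |c| + 3 := by positivity
    calc m * (|c| + 3) ≤ ((c + b) / (|c| + 3)) * (|c| + 3) :=
          mul_le_mul_of_nonneg_right hle hden.le
      _ = c + b := by field_simp
  set t := (1 : ℝ) - m with ht
  have ht0 : 0 ≤ t := by rw [ht]; linarith
  have ht1 : t < 1 := by rw [ht]; linarith
  have hnorm : ‖t • u‖ = t := by
    rw [norm_smul, hu, Real.norm_eq_abs, abs_of_nonneg ht0, mul_one]
  have hne : ‖t • u‖ ≠ 1 := by rw [hnorm]; linarith
  have hf := hab (t • u)
  rw [fex_val _ hne, hnorm, real_inner_smul_right] at hf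
  have habs : |t ^ 2 - 1| = 1 - t ^ 2 := by
    rw [abs_of_nonpos (by nlinarith)]; ring
  rw [habs, ← hc, ht] at hf
  have hcabs : c ≤ |c| := le_abs_self c
  nlinarith [mul_le_mul_of_nonneg_left hcabs hm0.le, sq_nonneg m, hm3, hm0]

lemma env_zero (hN : 1 ≤ N) (η : Euc N) (hη : ‖η‖ ≤ 1) :
    convEnv (fun ζ => ((fex N ζ : ℝ) : EReal)) η = ((0 : ℝ) : EReal) := by
  apply le_antisymm
  · apply sSup_le
    rintro y ⟨a, b, hab, rfl⟩
    have hab' : ∀ ζ : Euc N, ⟪a, ζ⟫ + b ≤ fex N ζ := fun ζ => EReal.coe_le_coe_iff.1 (hab ζ)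
    exact_mod_cast minor_nonpos hN a b hab' η hη
  · apply le_sSup
    refine ⟨0, 0, fun ζ => ?_, ?_⟩
    · simp only [inner_zero_left, add_zero]
      exact_mod_cast (fex_pos ζ).le
    · simp

end Aux

/-- Example 2.3: for the function `fex`, `f** ≡ 0` on the closed unit ball while `f > 0`
everywhere; consequently at `ξ = 0` one has `f**(0) = 0 < f(0)` and yet `0` admits no strictly
positive convex combination `Σ αᵢ ξᵢ = 0` with `Σ αᵢ f(ξᵢ) = 0`, so (HF)(ii) fails. -/
theorem stmt8 {N : ℕ} (hN : 1 ≤ N) :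
    (∀ η : Euc N, ‖η‖ ≤ 1 → convEnv (fun ζ => ((fex N ζ : ℝ) : EReal)) η = ((0 : ℝ) : EReal)) ∧
    (∀ η : Euc N, 0 < fex N η) ∧
    convEnv (fun ζ => ((fex N ζ : ℝ) : EReal)) 0 = ((0 : ℝ) : EReal) ∧
    0 < fex N (0 : Euc N) ∧
    ¬ ∃ k : ℕ, 1 ≤ k ∧ ∃ (ξs : Fin (k + 1) → Euc N) (α : Fin (k + 1) → ℝ),
        (∀ i, 0 < α i) ∧ (∑ i, α i = 1) ∧ (∑ i, α i • ξs i = 0) ∧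
        (∑ i, α i * fex N (ξs i) = 0) := by
  refine ⟨fun η hη => env_zero hN η hη, fun η => fex_pos η, env_zero hN 0 (by simp),
    fex_pos 0, ?_⟩
  rintro ⟨k, hk, ξs, α, hα, hsum1, hsum0, hf0⟩
  have hpos : 0 < ∑ i, α i * fex N (ξs i) :=
    Finset.sum_pos (fun i _ => mul_pos (hα i) (fex_pos _)) Finset.univ_nonempty
  linarith
end
end
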